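/- Let ℐ be a usual Cantor scheme, φ : ℕ → ℕ strictly increasing with φ(0) > 0, and let ℐ̃ be the derived Cantor scheme defined by J̃_∅ = J_∅ and J̃_{(s₀,…,s_n)} = J_{s₀^{φ²(0)} ⌢ s₁^{φ⁴(0)−φ²(0)} ⌢ ⋯ ⌢ s_n^{φ^{2n+2}(0)−φ^{2n}(0)}}. Suppose p ∈ ℕ and φ^{2p}(0) ≤ n < φ^{2p+1}(0). Then for every ξ > 3^{n−φ(n)}, the set ∂ℐ_{n,ξ} of endpoints of intervals in ℐ_{n,ξ} is contained in {min J_∅, max J_∅} ∪ ⋃_{s ∈ {0,1}^{≤p}} J̃^{md}_s. -/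

import Mathlib

/-!
A point of `∂ℐ_{n,ξ}` is `min J_s`, `left_s ξ`, `right_s ξ` or `max J_s` for some `|s| = n`.
Descending through the derived scheme, every point of `J_∅` lies either in a middle gap
`J̃^{md}_u` with `|u| ≤ p`, or in some `J̃_u = J_v` with `|u| = p + 1`; in the latter case the
index `v` has length `φ^{2p+2}(0)` and is constant on the block `[φ^{2p}(0), φ^{2p+2}(0))`,
which contains `n`.

Intervals of one level are disjoint, so `min J_s = min J_{s⌢0⋯0}` is then `min J_v`, an
endpoint of a derived gap; likewise for `max J_s`. With `3^{-(k+1)} < ξ ≤ 3^{-k}`, the point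
`left_s ξ` lies in `J_{s⌢0^{k+1}}` but not in `J_{s⌢0^{k+2}}`, so `v` would switch from `0`
to `1` at position `n + k + 1`. The bound `ξ > 3^{n - φ(n)}` gives
`n + k + 1 ≤ φ(n) < φ^{2p+2}(0)`, still inside the constant block, so this cannot happen.
The same holds for `right_s ξ`.
-/

open Set Topology Filter

/-- A usual Cantor scheme, given by the endpoint functions of the intervals
`J_s = [a s, b s]`, indexed by finite binary sequences (lists of booleans),
where `s ++ [false]` is `s⌢0` and `s ++ [true]` is `s⌢1`. -/
structure CantorScheme where
  a : List Bool → ℝ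
  b : List Bool → ℝ
  left_min : ∀ s, a (s ++ [false]) = a s
  right_max : ∀ s, b (s ++ [true]) = b s
  lt1 : ∀ s, a (s ++ [false]) < b (s ++ [false])
  lt2 : ∀ s, b (s ++ [false]) < a (s ++ [true])
  lt3 : ∀ s, a (s ++ [true]) < b (s ++ [true])
  diam_tendsto : ∀ f : ℕ → Bool,
    Filter.Tendsto (fun n => b (List.ofFn fun i : Fin n => f i) - a (List.ofFn fun i : Fin n => f i))
      Filter.atTop (nhds 0)

/-- For `ξ ∈ (0,1]`, the unique `k` with `3^{-(k+1)} < ξ ≤ 3^{-k}`. -/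
noncomputable def scaleIndex (ξ : ℝ) : ℕ := ⌊-Real.logb 3 ξ⌋₊

/-- The piecewise linear map `left_s : [0,1] → J_s` with `left_s 0 = min J_s`,
`left_s (1/3^k) = max J_{s⌢0^{k+1}}`, linear on each `[1/3^{k+1}, 1/3^k]`. -/
noncomputable def CantorScheme.leftMap (C : CantorScheme) (s : List Bool) (ξ : ℝ) : ℝ :=
  if ξ ≤ 0 then C.a s
  else
    let k := scaleIndex ξ
    let x0 : ℝ := (3:ℝ)⁻¹ ^ (k + 1)
    let x1 : ℝ := (3:ℝ)⁻¹ ^ k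
    let y0 := C.b (s ++ List.replicate (k + 2) false)
    let y1 := C.b (s ++ List.replicate (k + 1) false)
    y0 + (ξ - x0) / (x1 - x0) * (y1 - y0)

/-- The piecewise linear map `right_s : [0,1] → J_s` with `right_s 0 = max J_s`,
`right_s (1/3^k) = min J_{s⌢1^{k+1}}`, linear on each `[1/3^{k+1}, 1/3^k]`. -/
noncomputable def CantorScheme.rightMap (C : CantorScheme) (s : List Bool) (ξ : ℝ) : ℝ :=
  if ξ ≤ 0 then C.b s
  else
    let k := scaleIndex ξ
    let x0 : ℝ := (3:ℝ)⁻¹ ^ (k + 1)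
    let x1 : ℝ := (3:ℝ)⁻¹ ^ k
    let y0 := C.a (s ++ List.replicate (k + 2) true)
    let y1 := C.a (s ++ List.replicate (k + 1) true)
    y0 + (ξ - x0) / (x1 - x0) * (y1 - y0)

/-- The set `∂ℐ_{n,ξ}` of endpoints of the intervals
`left_s([0,ξ]) = [min J_s, left_s ξ]` and `right_s([0,ξ]) = [right_s ξ, max J_s]`,
for `s` ranging over binary sequences of length `n`. -/
noncomputable def CantorScheme.boundary (C : CantorScheme) (n : ℕ) (ξ : ℝ) : Finset ℝ :=
  Finset.image
    (fun p : (Fin n → Bool) × Fin 4 =>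
      ![C.a (List.ofFn p.1), C.leftMap (List.ofFn p.1) ξ,
        C.rightMap (List.ofFn p.1) ξ, C.b (List.ofFn p.1)] p.2)
    Finset.univ

/-- Alternating product `j x₁^{±1} j x₂^{∓1} ⋯` along a list, starting with the sign
given by the boolean (`false` = inverse first). -/
def altProd {G : Type*} [Group G] (j : ℝ → G) : Bool → List ℝ → G
  | _, [] => 1
  | sgn, x :: l => (if sgn then j x else (j x)⁻¹) * altProd j (!sgn) l

/-- `π₋(X) = j x₁⁻¹ · j x₂ · j x₃⁻¹ ⋯` where `x₁ < x₂ < ⋯` enumerates the finite set `X`. -/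
noncomputable def piMinus {G : Type*} [Group G] (j : ℝ → G) (X : Finset ℝ) : G :=
  altProd j false (X.sort (· ≤ ·))

/-- The map `z_n : [0,1] → G`, `z_n 0 = e`, `z_n ξ = π₋(∂ℐ_{n,ξ})` for `ξ > 0`. -/
noncomputable def CantorScheme.z {G : Type*} [Group G] (C : CantorScheme) (j : ℝ → G)
    (n : ℕ) (ξ : ℝ) : G :=
  if ξ ≤ 0 then 1 else piMinus j (C.boundary n ξ)

/-- `j` is a functorial embedding of `[0,1]` into the topological group `G`:
a topological embedding of `[0,1]` such that every autohomeomorphism `h` of `[0,1]`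
extends to a continuous group homomorphism `H : G → G` with `H ∘ j = j ∘ h`. -/
def FunctorialEmbedding {G : Type*} [Group G] [TopologicalSpace G] (j : ℝ → G) : Prop :=
  Topology.IsEmbedding ((Set.Icc (0:ℝ) 1).restrict j) ∧
  ∀ h : Set.Icc (0:ℝ) 1 ≃ₜ Set.Icc (0:ℝ) 1,
    ∃ H : G →* G, Continuous H ∧ ∀ x : Set.Icc (0:ℝ) 1, H (j x) = j (h x)

/-- The index expansion defining the derived Cantor scheme `ℐ̃`:
`(s₀,…,s_n) ↦ s₀^{φ²(0)} ⌢ s₁^{φ⁴(0)-φ²(0)} ⌢ ⋯ ⌢ s_n^{φ^{2n+2}(0)-φ^{2n}(0)}`. -/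
def expandSeq (φ : ℕ → ℕ) (s : List Bool) : List Bool :=
  (List.finRange s.length).flatMap fun (k : Fin s.length) =>
    List.replicate (φ^[2 * (k : ℕ) + 2] 0 - φ^[2 * (k : ℕ)] 0) (s.get k)
namespace CantorScheme

variable (C : CantorScheme)

def interval (t : List Bool) : Set ℝ := Icc (C.a t) (C.b t)

lemma a_le_a_append_singleton (t : List Bool) (c : Bool) : C.a t ≤ C.a (t ++ [c]) := by
  cases c
  · exact (C.left_min t).ge
  · linarith [C.left_min t, C.lt1 t, C.lt2 t]

lemma b_append_singleton_le_b (t : List Bool) (c : Bool) : C.b (t ++ [c]) ≤ C.b t := by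
  cases c
  · linarith [C.right_max t, C.lt2 t, C.lt3 t]
  · exact (C.right_max t).le

lemma a_le_a_append (t w : List Bool) : C.a t ≤ C.a (t ++ w) := by
  induction w using List.reverseRecOn with
  | nil => simp
  | append_singleton w c ih =>
    rw [← List.append_assoc]
    exact ih.trans (C.a_le_a_append_singleton _ c)

lemma b_append_le_b (t w : List Bool) : C.b (t ++ w) ≤ C.b t := by
  induction w using List.reverseRecOn with
  | nil => simp
  | append_singleton w c ih =>
    rw [← List.append_assoc]
    exact (C.b_append_singleton_le_b _ c).trans ih

lemma b_append_false_lt_b (t : List Bool) : C.b (t ++ [false]) < C.b t := by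
  linarith [C.lt2 t, C.lt3 t, C.right_max t]

lemma a_lt_a_append_true (t : List Bool) : C.a t < C.a (t ++ [true]) := by
  linarith [C.lt1 t, C.lt2 t, C.left_min t]

lemma a_lt_b (t : List Bool) : C.a t < C.b t := by
  linarith [C.left_min t, C.lt1 t, C.b_append_false_lt_b t]

lemma a_mem_interval (t : List Bool) : C.a t ∈ C.interval t := ⟨le_rfl, (C.a_lt_b t).le⟩

lemma b_mem_interval (t : List Bool) : C.b t ∈ C.interval t := ⟨(C.a_lt_b t).le, le_rfl⟩

lemma interval_append_subset (t w : List Bool) : C.interval (t ++ w) ⊆ C.interval t :=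
  Icc_subset_Icc (C.a_le_a_append t w) (C.b_append_le_b t w)

lemma interval_subset_interval_nil (t : List Bool) : C.interval t ⊆ C.interval [] :=
  C.interval_append_subset [] t

lemma a_append_replicate_false (t : List Bool) (d : ℕ) :
    C.a (t ++ List.replicate d false) = C.a t := by
  induction d with
  | zero => simp
  | succ d ih => rw [List.replicate_succ', ← List.append_assoc, C.left_min, ih]

lemma b_append_replicate_true (t : List Bool) (d : ℕ) :
    C.b (t ++ List.replicate d true) = C.b t := by
  induction d with
  | zero => simp
  | succ d ih => rw [List.replicate_succ', ← List.append_assoc, C.right_max, ih]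

lemma b_append_replicate_le_a_append_replicate (t : List Bool) {d : ℕ} (hd : d ≠ 0) :
    C.b (t ++ List.replicate d false) ≤ C.a (t ++ List.replicate d true) := by
  obtain ⟨e, rfl⟩ := Nat.exists_eq_succ_of_ne_zero hd
  rw [List.replicate_succ, List.replicate_succ, List.append_cons t false, List.append_cons t true]
  linarith [C.b_append_le_b (t ++ [false]) (List.replicate e false), C.lt2 t,
    C.a_le_a_append (t ++ [true]) (List.replicate e true)]

lemma eq_of_mem_interval {x : ℝ} {v w : List Bool} (hlen : v.length = w.length)
    (hv : x ∈ C.interval v) (hw : x ∈ C.interval w) : v = w := by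
  induction v using List.reverseRecOn generalizing w with
  | nil => simpa [eq_comm] using hlen
  | append_singleton v c ih =>
    obtain ⟨w, d, rfl⟩ := (List.eq_nil_or_concat' w).resolve_left
      (by rintro rfl; simp at hlen)
    simp only [List.length_append, List.length_singleton, Nat.add_right_cancel_iff] at hlen
    obtain rfl := ih hlen (C.interval_append_subset v [c] hv) (C.interval_append_subset w [d] hw)
    have hgap := C.lt2 v
    cases c <;> cases d
    · rfl
    · linarith [hv.2, hw.1]
    · linarith [hv.1, hw.2]
    · rfl

lemma prefix_of_mem_interval {x : ℝ} {t v : List Bool} (hlen : t.length ≤ v.length)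
    (ht : x ∈ C.interval t) (hv : x ∈ C.interval v) : t <+: v := by
  rw [List.prefix_iff_eq_take]
  refine C.eq_of_mem_interval (by simp [hlen]) ht ?_
  rw [← List.take_append_drop t.length v] at hv
  exact C.interval_append_subset _ _ hv

end CantorScheme

@[simp]
lemma expandSeq_nil (φ : ℕ → ℕ) : expandSeq φ [] = [] := by
  simp [expandSeq]

lemma expandSeq_append_singleton (φ : ℕ → ℕ) (s : List Bool) (c : Bool) :
    expandSeq φ (s ++ [c]) =
      expandSeq φ s ++ List.replicate (φ^[2 * s.length + 2] 0 - φ^[2 * s.length] 0) c := by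
  have unfold_at_length : ∀ (n : ℕ) (l : List Bool) (h : l.length = n), expandSeq φ l =
      (List.finRange n).flatMap fun k : Fin n =>
        List.replicate (φ^[2 * (k : ℕ) + 2] 0 - φ^[2 * (k : ℕ)] 0)
          (l[(k : ℕ)]'(h ▸ k.isLt)) := by
    rintro _ l rfl
    rfl
  rw [unfold_at_length (s.length + 1) (s ++ [c]) (by simp), unfold_at_length s.length s rfl,
    List.finRange_succ_last, List.flatMap_append, List.flatMap_map]
  congr 1
  · apply List.flatMap_congr
    intro k _
    simp [List.getElem_append_left k.isLt]
  · simp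

lemma length_expandSeq {φ : ℕ → ℕ} (hφ : ∀ k, φ^[2 * k] 0 ≤ φ^[2 * k + 2] 0)
    (s : List Bool) : (expandSeq φ s).length = φ^[2 * s.length] 0 := by
  induction s using List.reverseRecOn with
  | nil => simp
  | append_singleton s c ih =>
    have := hφ s.length
    rw [expandSeq_append_singleton, List.length_append, List.length_replicate, ih,
      List.length_append, List.length_singleton, mul_add_one]
    omega

lemma getElem_expandSeq_append_singleton {φ : ℕ → ℕ} {s : List Bool} {c : Bool} {i : ℕ}
    (hi : (expandSeq φ s).length ≤ i) (hi' : i < (expandSeq φ (s ++ [c])).length) :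
    (expandSeq φ (s ++ [c]))[i] = c := by
  simp only [expandSeq_append_singleton] at hi' ⊢
  rw [List.getElem_append_right hi, List.getElem_replicate]

lemma inv_pow_eq_rpow_neg {x : ℝ} (hx : 0 ≤ x) (k : ℕ) : x⁻¹ ^ k = x ^ (-(k : ℝ)) := by
  rw [Real.rpow_neg hx, Real.rpow_natCast, inv_pow]

lemma scaleIndex_lt {ξ : ℝ} {m : ℕ} (hm : m ≠ 0) (hξ : (3 : ℝ) ^ (-(m : ℤ)) < ξ) :
    scaleIndex ξ < m := by
  have hξ0 : 0 < ξ := (zpow_pos (by norm_num) _).trans hξ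
  rw [scaleIndex, Nat.floor_lt' hm, neg_lt, Real.lt_logb_iff_rpow_lt (by norm_num) hξ0]
  exact_mod_cast hξ

lemma scaleIndex_spec {ξ : ℝ} (hξ0 : 0 < ξ) (hξ1 : ξ ≤ 1) :
    (3⁻¹ : ℝ) ^ (scaleIndex ξ + 1) < ξ ∧ ξ ≤ (3⁻¹ : ℝ) ^ scaleIndex ξ := by
  have hlog : 0 ≤ -Real.logb 3 ξ := neg_nonneg.2 (Real.logb_nonpos (by norm_num) hξ0.le hξ1)
  rw [inv_pow_eq_rpow_neg zero_le_three, inv_pow_eq_rpow_neg zero_le_three,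
    ← Real.lt_logb_iff_rpow_lt (by norm_num) hξ0, ← Real.logb_le_iff_le_rpow (by norm_num) hξ0]
  have h1 := Nat.floor_le hlog
  have h2 := Nat.lt_floor_add_one (-Real.logb 3 ξ)
  rw [← scaleIndex] at h1 h2
  push_cast
  constructor <;> linarith

lemma scaleIndex_coeff_mem_Ioc {ξ : ℝ} (hξ0 : 0 < ξ) (hξ1 : ξ ≤ 1) :
    (ξ - (3⁻¹ : ℝ) ^ (scaleIndex ξ + 1)) /
        ((3⁻¹ : ℝ) ^ scaleIndex ξ - (3⁻¹ : ℝ) ^ (scaleIndex ξ + 1)) ∈ Ioc 0 1 := by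
  obtain ⟨hlo, hhi⟩ := scaleIndex_spec hξ0 hξ1
  have hgap : (3⁻¹ : ℝ) ^ (scaleIndex ξ + 1) < (3⁻¹ : ℝ) ^ scaleIndex ξ := by
    rw [pow_succ]
    have : (0 : ℝ) < (3⁻¹ : ℝ) ^ scaleIndex ξ := by positivity
    linarith
  exact ⟨div_pos (by linarith) (by linarith), (div_le_one (by linarith)).2 (by linarith)⟩

namespace CantorScheme

variable (C : CantorScheme) {φ : ℕ → ℕ}

/-- `{min J_∅, max J_∅} ∪ ⋃_{|s| ≤ p} J̃^{md}_s`. -/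
def derivedGaps (φ : ℕ → ℕ) (p : ℕ) : Set ℝ :=
  ({C.a [], C.b []} : Set ℝ) ∪
    ⋃ s ∈ {l : List Bool | l.length ≤ p},
      Icc (C.b (expandSeq φ (s ++ [false]))) (C.a (expandSeq φ (s ++ [true])))

lemma a_expandSeq_append_false (s : List Bool) :
    C.a (expandSeq φ (s ++ [false])) = C.a (expandSeq φ s) := by
  rw [expandSeq_append_singleton, a_append_replicate_false]

lemma b_expandSeq_append_true (s : List Bool) :
    C.b (expandSeq φ (s ++ [true])) = C.b (expandSeq φ s) := by
  rw [expandSeq_append_singleton, b_append_replicate_true]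

lemma b_expandSeq_append_false_le (hφ : ∀ k, φ^[2 * k] 0 < φ^[2 * k + 2] 0) (s : List Bool) :
    C.b (expandSeq φ (s ++ [false])) ≤ C.a (expandSeq φ (s ++ [true])) := by
  rw [expandSeq_append_singleton, expandSeq_append_singleton]
  exact C.b_append_replicate_le_a_append_replicate _ (Nat.sub_ne_zero_of_lt (hφ s.length))

lemma mem_derivedGaps_of_gap {p : ℕ} {u : List Bool} (hu : u.length ≤ p) {x : ℝ}
    (hx : x ∈ Icc (C.b (expandSeq φ (u ++ [false]))) (C.a (expandSeq φ (u ++ [true])))) :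
    x ∈ C.derivedGaps φ p :=
  Or.inr (mem_iUnion₂.2 ⟨u, hu, hx⟩)

lemma a_expandSeq_mem_derivedGaps (hφ : ∀ k, φ^[2 * k] 0 < φ^[2 * k + 2] 0) {p : ℕ}
    {s : List Bool} (hs : s.length ≤ p + 1) : C.a (expandSeq φ s) ∈ C.derivedGaps φ p := by
  induction s using List.reverseRecOn with
  | nil => exact Or.inl (by simp)
  | append_singleton s c ih =>
    simp only [List.length_append, List.length_singleton, add_le_add_iff_right] at hs
    cases c
    · rw [C.a_expandSeq_append_false]
      exact ih (by omega)
    · exact C.mem_derivedGaps_of_gap hs ⟨C.b_expandSeq_append_false_le hφ s, le_rfl⟩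

lemma b_expandSeq_mem_derivedGaps (hφ : ∀ k, φ^[2 * k] 0 < φ^[2 * k + 2] 0) {p : ℕ}
    {s : List Bool} (hs : s.length ≤ p + 1) : C.b (expandSeq φ s) ∈ C.derivedGaps φ p := by
  induction s using List.reverseRecOn with
  | nil => exact Or.inl (by simp)
  | append_singleton s c ih =>
    simp only [List.length_append, List.length_singleton, add_le_add_iff_right] at hs
    cases c
    · exact C.mem_derivedGaps_of_gap hs ⟨le_rfl, C.b_expandSeq_append_false_le hφ s⟩
    · rw [C.b_expandSeq_append_true]
      exact ih (by omega)

lemma mem_derivedGaps_of_mem_interval_expandSeq {p : ℕ} {x : ℝ}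
    (h : ∀ s : List Bool, s.length = p + 1 → x ∈ C.interval (expandSeq φ s) →
      x ∈ C.derivedGaps φ p) :
    ∀ (q : ℕ) (w : List Bool), w.length + q = p + 1 → x ∈ C.interval (expandSeq φ w) →
      x ∈ C.derivedGaps φ p := by
  intro q
  induction q with
  | zero => exact fun w hw hx => h w hw hx
  | succ q ih =>
    intro w hw hx
    have hw' : (w ++ [false]).length + q = p + 1 ∧ (w ++ [true]).length + q = p + 1 := by
      simp only [List.length_append, List.length_singleton]
      omega
    rcases le_or_gt x (C.b (expandSeq φ (w ++ [false]))) with h0 | h0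
    · exact ih _ hw'.1 ⟨(C.a_expandSeq_append_false w).symm ▸ hx.1, h0⟩
    rcases lt_or_ge x (C.a (expandSeq φ (w ++ [true]))) with h1 | h1
    · exact C.mem_derivedGaps_of_gap (by omega) ⟨h0.le, h1.le⟩
    · exact ih _ hw'.2 ⟨h1, (C.b_expandSeq_append_true w).symm ▸ hx.2⟩

lemma mem_derivedGaps_of_forall_mem_interval_expandSeq {p : ℕ} {x : ℝ}
    (hx : x ∈ C.interval [])
    (h : ∀ s : List Bool, s.length = p + 1 → x ∈ C.interval (expandSeq φ s) →
      x ∈ C.derivedGaps φ p) :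
    x ∈ C.derivedGaps φ p :=
  C.mem_derivedGaps_of_mem_interval_expandSeq h (p + 1) [] (zero_add _) (by simpa using hx)

/-- An index sequence of a level-`(p+1)` derived interval is constant on the positions
`[φ^{2p}(0), φ^{2p+2}(0))`, so it cannot continue `t⌢c` by `1 - c` there. -/
lemma not_mem_interval_expandSeq_of_turn (hφ : ∀ k, φ^[2 * k] 0 ≤ φ^[2 * k + 2] 0) {p : ℕ}
    {t : List Bool} {c : Bool} {x : ℝ} (ht : φ^[2 * p] 0 ≤ t.length)
    (ht' : t.length + 2 ≤ φ^[2 * p + 2] 0) (hx : x ∈ C.interval (t ++ [c]))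
    (hx' : x ∉ C.interval (t ++ [c] ++ [c])) {s : List Bool} (hs : s.length = p + 1) :
    x ∉ C.interval (expandSeq φ s) := by
  intro hxs
  obtain ⟨u, e, rfl⟩ := (List.eq_nil_or_concat' s).resolve_left (by rintro rfl; simp at hs)
  have hu : u.length = p := by simpa using hs
  have hlen : (expandSeq φ (u ++ [e])).length = φ^[2 * p + 2] 0 := by
    rw [length_expandSeq hφ, hs, mul_add_one]
  have hlen_u : (expandSeq φ u).length = φ^[2 * p] 0 := by rw [length_expandSeq hφ, hu]
  obtain ⟨r, hr⟩ := C.prefix_of_mem_interval (by simp; omega) hx hxs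
  obtain ⟨d, r, rfl⟩ := List.exists_cons_of_ne_nil (l := r) (by
    rintro rfl
    have := congrArg List.length hr
    simp only [List.append_nil, List.length_append, List.length_singleton] at this
    omega)
  have entry : ∀ i (hi : t.length ≤ i) (hi' : i < φ^[2 * p + 2] 0),
      (t ++ [c] ++ d :: r)[i]'(by rw [hr, hlen]; exact hi') = e := fun i hi hi' => by
    simp only [hr]
    exact getElem_expandSeq_append_singleton (by omega) _
  have hc : c = e := by simpa using entry t.length le_rfl (by omega)
  have hd : d = e := by simpa using entry (t.length + 1) (by omega) (by omega)
  subst hc hd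
  exact hx' (C.interval_append_subset _ r (by simpa [← hr] using hxs))

lemma leftMap_mem_interval {ξ : ℝ} (hξ0 : 0 < ξ) (hξ1 : ξ ≤ 1) (s : List Bool) :
    C.leftMap s ξ ∈ C.interval (s ++ List.replicate (scaleIndex ξ) false ++ [false]) ∧
      C.leftMap s ξ ∉
        C.interval (s ++ List.replicate (scaleIndex ξ) false ++ [false] ++ [false]) := by
  obtain ⟨hc0, hc1⟩ := scaleIndex_coeff_mem_Ioc hξ0 hξ1
  have hval : C.leftMap s ξ = C.b (s ++ List.replicate (scaleIndex ξ + 2) false) +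
      (ξ - (3⁻¹ : ℝ) ^ (scaleIndex ξ + 1)) /
        ((3⁻¹ : ℝ) ^ scaleIndex ξ - (3⁻¹ : ℝ) ^ (scaleIndex ξ + 1)) *
        (C.b (s ++ List.replicate (scaleIndex ξ + 1) false) -
          C.b (s ++ List.replicate (scaleIndex ξ + 2) false)) := by
    simp only [leftMap, if_neg hξ0.not_ge]
  rw [List.replicate_succ' (n := scaleIndex ξ + 1), List.replicate_succ' (n := scaleIndex ξ),
    ← List.append_assoc, ← List.append_assoc] at hval
  have hb := C.b_append_false_lt_b (s ++ List.replicate (scaleIndex ξ) false ++ [false])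
  have ha := C.lt1 (s ++ List.replicate (scaleIndex ξ) false ++ [false])
  rw [C.left_min] at ha
  rw [hval]
  refine ⟨⟨by nlinarith, by nlinarith⟩, fun h => ?_⟩
  nlinarith [h.2]

lemma rightMap_mem_interval {ξ : ℝ} (hξ0 : 0 < ξ) (hξ1 : ξ ≤ 1) (s : List Bool) :
    C.rightMap s ξ ∈ C.interval (s ++ List.replicate (scaleIndex ξ) true ++ [true]) ∧
      C.rightMap s ξ ∉
        C.interval (s ++ List.replicate (scaleIndex ξ) true ++ [true] ++ [true]) := by
  obtain ⟨hc0, hc1⟩ := scaleIndex_coeff_mem_Ioc hξ0 hξ1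
  have hval : C.rightMap s ξ = C.a (s ++ List.replicate (scaleIndex ξ + 2) true) +
      (ξ - (3⁻¹ : ℝ) ^ (scaleIndex ξ + 1)) /
        ((3⁻¹ : ℝ) ^ scaleIndex ξ - (3⁻¹ : ℝ) ^ (scaleIndex ξ + 1)) *
        (C.a (s ++ List.replicate (scaleIndex ξ + 1) true) -
          C.a (s ++ List.replicate (scaleIndex ξ + 2) true)) := by
    simp only [rightMap, if_neg hξ0.not_ge]
  rw [List.replicate_succ' (n := scaleIndex ξ + 1), List.replicate_succ' (n := scaleIndex ξ),
    ← List.append_assoc, ← List.append_assoc] at hval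
  have ha := C.a_lt_a_append_true (s ++ List.replicate (scaleIndex ξ) true ++ [true])
  have hb := C.lt3 (s ++ List.replicate (scaleIndex ξ) true ++ [true])
  rw [C.right_max] at hb
  rw [hval]
  refine ⟨⟨by nlinarith, by nlinarith⟩, fun h => ?_⟩
  nlinarith [h.1]

lemma a_mem_derivedGaps (hφ : ∀ k, φ^[2 * k] 0 < φ^[2 * k + 2] 0) {p : ℕ} {s : List Bool}
    (hs : s.length ≤ φ^[2 * p + 2] 0) : C.a s ∈ C.derivedGaps φ p := by
  refine C.mem_derivedGaps_of_forall_mem_interval_expandSeq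
    (C.interval_subset_interval_nil s (C.a_mem_interval s)) fun s' hs' hx => ?_
  set d := φ^[2 * p + 2] 0 - s.length
  have hlen : (expandSeq φ s').length = φ^[2 * p + 2] 0 := by
    rw [length_expandSeq (fun k => (hφ k).le), hs', mul_add_one]
  have hx' : C.a s ∈ C.interval (s ++ List.replicate d false) := by
    simpa only [C.a_append_replicate_false] using C.a_mem_interval (s ++ List.replicate d false)
  have hv : s ++ List.replicate d false = expandSeq φ s' :=
    C.eq_of_mem_interval (by rw [List.length_append, List.length_replicate, hlen]; omega) hx' hx
  rw [← C.a_append_replicate_false s d, hv]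
  exact C.a_expandSeq_mem_derivedGaps hφ hs'.le

lemma b_mem_derivedGaps (hφ : ∀ k, φ^[2 * k] 0 < φ^[2 * k + 2] 0) {p : ℕ} {s : List Bool}
    (hs : s.length ≤ φ^[2 * p + 2] 0) : C.b s ∈ C.derivedGaps φ p := by
  refine C.mem_derivedGaps_of_forall_mem_interval_expandSeq
    (C.interval_subset_interval_nil s (C.b_mem_interval s)) fun s' hs' hx => ?_
  set d := φ^[2 * p + 2] 0 - s.length
  have hlen : (expandSeq φ s').length = φ^[2 * p + 2] 0 := by
    rw [length_expandSeq (fun k => (hφ k).le), hs', mul_add_one]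
  have hx' : C.b s ∈ C.interval (s ++ List.replicate d true) := by
    simpa only [C.b_append_replicate_true] using C.b_mem_interval (s ++ List.replicate d true)
  have hv : s ++ List.replicate d true = expandSeq φ s' :=
    C.eq_of_mem_interval (by rw [List.length_append, List.length_replicate, hlen]; omega) hx' hx
  rw [← C.b_append_replicate_true s d, hv]
  exact C.b_expandSeq_mem_derivedGaps hφ hs'.le

lemma leftMap_mem_derivedGaps (hφ : ∀ k, φ^[2 * k] 0 ≤ φ^[2 * k + 2] 0) {p : ℕ}
    {s : List Bool} {ξ : ℝ} (hξ0 : 0 < ξ) (hξ1 : ξ ≤ 1) (hs : φ^[2 * p] 0 ≤ s.length)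
    (hs' : s.length + scaleIndex ξ + 2 ≤ φ^[2 * p + 2] 0) :
    C.leftMap s ξ ∈ C.derivedGaps φ p := by
  obtain ⟨hx, hx'⟩ := C.leftMap_mem_interval hξ0 hξ1 s
  exact C.mem_derivedGaps_of_forall_mem_interval_expandSeq (C.interval_subset_interval_nil _ hx)
    fun v hv hxv => absurd hxv <| C.not_mem_interval_expandSeq_of_turn hφ
      (by simp only [List.length_append, List.length_replicate]; omega)
      (by simp only [List.length_append, List.length_replicate]; omega) hx hx' hv

lemma rightMap_mem_derivedGaps (hφ : ∀ k, φ^[2 * k] 0 ≤ φ^[2 * k + 2] 0) {p : ℕ}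
    {s : List Bool} {ξ : ℝ} (hξ0 : 0 < ξ) (hξ1 : ξ ≤ 1) (hs : φ^[2 * p] 0 ≤ s.length)
    (hs' : s.length + scaleIndex ξ + 2 ≤ φ^[2 * p + 2] 0) :
    C.rightMap s ξ ∈ C.derivedGaps φ p := by
  obtain ⟨hx, hx'⟩ := C.rightMap_mem_interval hξ0 hξ1 s
  exact C.mem_derivedGaps_of_forall_mem_interval_expandSeq (C.interval_subset_interval_nil _ hx)
    fun v hv hxv => absurd hxv <| C.not_mem_interval_expandSeq_of_turn hφ
      (by simp only [List.length_append, List.length_replicate]; omega)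
      (by simp only [List.length_append, List.length_replicate]; omega) hx hx' hv

lemma exists_of_mem_boundary {n : ℕ} {ξ x : ℝ} (hx : x ∈ C.boundary n ξ) :
    ∃ s : List Bool, s.length = n ∧
      (x = C.a s ∨ x = C.leftMap s ξ ∨ x = C.rightMap s ξ ∨ x = C.b s) := by
  obtain ⟨⟨f, i⟩, -, rfl⟩ := Finset.mem_image.1 hx
  refine ⟨List.ofFn f, List.length_ofFn, ?_⟩
  fin_cases i <;> simp

end CantorScheme

lemma StrictMono.lt_apply_of_pos {φ : ℕ → ℕ} (hφ : StrictMono φ) (hφ0 : 0 < φ 0) (x : ℕ) :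
    x < φ x := by
  have := hφ.add_le_nat x 0
  rw [add_zero] at this
  omega

/-- If `φ^{2p}(0) ≤ n < φ^{2p+1}(0)` then for every `ξ > 3^{n - φ n}` (with `ξ ≤ 1`),
the set `∂ℐ_{n,ξ}` is contained in `{min J_∅, max J_∅}` together with the union of the
middle-gap intervals `J̃^{md}_s` of the derived scheme, over sequences `s` of length `≤ p`. -/
theorem stmt9 (C : CantorScheme) (φ : ℕ → ℕ) (hφ : StrictMono φ) (hφ0 : 0 < φ 0)
    (p n : ℕ) (hn1 : φ^[2 * p] 0 ≤ n) (hn2 : n < φ^[2 * p + 1] 0)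
    (ξ : ℝ) (hξ : (3:ℝ) ^ ((n : ℤ) - (φ n : ℤ)) < ξ) (hξ1 : ξ ≤ 1) :
    ↑(C.boundary n ξ) ⊆ ({C.a [], C.b []} : Set ℝ) ∪
      ⋃ s ∈ {l : List Bool | l.length ≤ p},
        Set.Icc (C.b (expandSeq φ (s ++ [false]))) (C.a (expandSeq φ (s ++ [true]))) := by
  have hlt := hφ.lt_apply_of_pos hφ0
  have hstep (k : ℕ) : φ^[2 * k] 0 < φ^[2 * k + 2] 0 := by
    rw [Function.iterate_succ_apply', Function.iterate_succ_apply']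
    exact (hlt _).trans (hlt _)
  have hφn : φ n < φ^[2 * p + 2] 0 := by
    rw [Function.iterate_succ_apply']
    exact hφ hn2
  have hk : scaleIndex ξ < φ n - n := by
    refine scaleIndex_lt (by have := hlt n; omega) ?_
    rwa [Nat.cast_sub (hlt n).le, neg_sub]
  have hξ0 : 0 < ξ := (zpow_pos (by norm_num) _).trans hξ
  intro x hx
  obtain ⟨s, rfl, rfl | rfl | rfl | rfl⟩ := C.exists_of_mem_boundary hx
  · exact C.a_mem_derivedGaps hstep (by omega)
  · exact C.leftMap_mem_derivedGaps (fun k => (hstep k).le) hξ0 hξ1 hn1 (by omega)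
  · exact C.rightMap_mem_derivedGaps (fun k => (hstep k).le) hξ0 hξ1 hn1 (by omega)
  · exact C.b_mem_derivedGaps hstep (by omega)
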